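/- Let A, B be accretive n×n complex matrices and t ∈ [0,1], with r = min{t, 1−t}. Then, in the Loewner order, ℜ(A !_t B) ≥ ( ((ℜA) !_t (ℜB))^{-1} − 2r·( ((ℜA) ! (ℜB))^{-1} − (ℜ(A ! B))^{-1} ) )^{-1} ≥ (ℜA) !_t (ℜB), where A !_t B = ((1−t)A^{-1} + tB^{-1})^{-1} and X ! Y = ((X^{-1}+Y^{-1})/2)^{-1}. In particular, the matrix inside the outer inverse in the middle expression is positive definite. -/

import Mathlib

/-!
Write an accretive `C` as `R + iS` with `R = ℜC > 0` and `S = ℑC` Hermitian, and let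
`Φ C = R + S R⁻¹ S`. From `C (1 - i R⁻¹S) = Φ C = (1 - i S R⁻¹) C` one gets
`ℜ(C⁻¹) = (Φ C)⁻¹`, hence `Φ (C⁻¹) = (ℜC)⁻¹`. Completing the square,
`Φ C - (R + K* S + S K - K* R K) = (R⁻¹S - K)* R (R⁻¹S - K) ≥ 0`, with equality at
`K = R⁻¹S`, so `Φ` is a pointwise supremum of affine functions of `C` and therefore convex.

For `t ≤ 1/2` put `P = A⁻¹`, `Q = B⁻¹` and `M = (P + Q)/2`, so that
`(1-t)P + tQ = (1-2t)P + 2tM`. The middle matrix of the statement is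
`N = (1-2t) Φ P + 2t Φ M`, and convexity of `Φ` gives
`Φ((1-t)P + tQ) ≤ N ≤ (1-t) Φ P + t Φ Q`.
Inverting, which is antitone on positive definite matrices, yields both inequalities.
The case `t ≥ 1/2` follows by exchanging `A` and `B`.
-/

open Matrix ComplexOrder

/-- The real part `ℜA = (A + A^*)/2` of a square complex matrix. -/
noncomputable def reMat {n : ℕ} (A : Matrix (Fin n) (Fin n) ℂ) : Matrix (Fin n) (Fin n) ℂ :=
  (1 / 2 : ℝ) • (A + Aᴴ)

/-- The weighted harmonic mean `A !_t B = ((1-t)A⁻¹ + tB⁻¹)⁻¹`. -/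
noncomputable def harmMean {n : ℕ} (A B : Matrix (Fin n) (Fin n) ℂ) (t : ℝ) :
    Matrix (Fin n) (Fin n) ℂ :=
  ((1 - t) • A⁻¹ + t • B⁻¹)⁻¹

section Matrix

variable {ι : Type*}

theorem Matrix.PosDef.smul_add_smul {X Y : Matrix ι ι ℂ} (hX : X.PosDef) (hY : Y.PosDef)
    {a b : ℝ} (ha : 0 ≤ a) (hb : 0 ≤ b) (hab : 0 < a + b) : (a • X + b • Y).PosDef := by
  rcases ha.eq_or_lt with rfl | ha
  · simpa using hY.smul (by simpa using hab)
  · exact (hX.smul ha).add_posSemidef (hY.posSemidef.smul hb)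

variable [Fintype ι] [DecidableEq ι]

open scoped Matrix.Norms.L2Operator MatrixOrder in
theorem Matrix.PosDef.posSemidef_inv_sub_inv {X Y : Matrix ι ι ℂ} (hX : X.PosDef)
    (h : (Y - X).PosSemidef) : (X⁻¹ - Y⁻¹).PosSemidef := by
  have hY : Y.PosDef := by simpa using hX.add_posSemidef h
  simpa [Matrix.le_iff, coe_units_inv] using
    CStarAlgebra.inv_le_inv (a := hX.isUnit.unit) (b := hY.isUnit.unit) hX.posSemidef.nonneg h

theorem Matrix.PosDef.isUnit_det {X : Matrix ι ι ℂ} (hX : X.PosDef) : IsUnit X.det :=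
  (isUnit_iff_isUnit_det X).mp hX.isUnit

theorem Matrix.PosDef.inv_inv {X : Matrix ι ι ℂ} (hX : X.PosDef) : X⁻¹⁻¹ = X :=
  nonsing_inv_nonsing_inv X hX.isUnit_det

theorem add_I_smul_mul_one_sub_I_smul {R S : Matrix ι ι ℂ} (hR : IsUnit R.det) :
    (R + Complex.I • S) * (1 - Complex.I • (R⁻¹ * S)) = R + S * R⁻¹ * S := by
  have hRR : R * (R⁻¹ * S) = S := by rw [← mul_assoc, mul_nonsing_inv R hR, one_mul]
  simp only [add_mul, mul_sub, mul_one, mul_smul_comm, smul_mul_assoc, hRR, mul_assoc]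
  match_scalars <;> simp

theorem one_sub_I_smul_mul_add_I_smul {R S : Matrix ι ι ℂ} (hR : IsUnit R.det) :
    (1 - Complex.I • (S * R⁻¹)) * (R + Complex.I • S) = R + S * R⁻¹ * S := by
  have hRR : S * R⁻¹ * R = S := by rw [mul_assoc, nonsing_inv_mul R hR, mul_one]
  simp only [mul_add, sub_mul, one_mul, mul_smul_comm, smul_mul_assoc, hRR]
  match_scalars <;> simp

theorem add_mul_inv_mul_sub_eq_conjTranspose_mul_mul {α : Type*} [CommRing α] [StarRing α]
    {R S K : Matrix ι ι α} (hR : IsUnit R.det) (hRh : R.IsHermitian) (hSh : S.IsHermitian) :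
    R + S * R⁻¹ * S - (R + Kᴴ * S + S * K - Kᴴ * R * K)
      = (R⁻¹ * S - K)ᴴ * R * (R⁻¹ * S - K) := by
  have hRR : ∀ Z : Matrix ι ι α, R * (R⁻¹ * Z) = Z := fun Z => by
    rw [← mul_assoc, mul_nonsing_inv R hR, one_mul]
  have hRR' : ∀ Z : Matrix ι ι α, R⁻¹ * (R * Z) = Z := fun Z => by
    rw [← mul_assoc, nonsing_inv_mul R hR, one_mul]
  rw [conjTranspose_sub, conjTranspose_mul, conjTranspose_nonsing_inv, hRh.eq, hSh.eq]
  simp only [sub_mul, mul_sub, mul_assoc, hRR, hRR']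
  abel

end Matrix

section Accretive

variable {n : ℕ}

noncomputable def imMat (A : Matrix (Fin n) (Fin n) ℂ) : Matrix (Fin n) (Fin n) ℂ :=
  (Complex.I / 2) • (Aᴴ - A)

noncomputable def phiMat (C : Matrix (Fin n) (Fin n) ℂ) : Matrix (Fin n) (Fin n) ℂ :=
  reMat C + imMat C * (reMat C)⁻¹ * imMat C

/-- The affine function of `C` whose supremum over `K` is `phiMat C`. -/
noncomputable def phiMinorant (K C : Matrix (Fin n) (Fin n) ℂ) : Matrix (Fin n) (Fin n) ℂ :=
  reMat C + Kᴴ * imMat C + imMat C * K - Kᴴ * reMat C * K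

theorem isHermitian_reMat (A : Matrix (Fin n) (Fin n) ℂ) : (reMat A).IsHermitian := by
  rw [IsHermitian, reMat, conjTranspose_smul, conjTranspose_add, conjTranspose_conjTranspose,
    star_trivial, add_comm]

theorem isHermitian_imMat (A : Matrix (Fin n) (Fin n) ℂ) : (imMat A).IsHermitian := by
  have hI : star (Complex.I / 2) = -(Complex.I / 2) := by simp [neg_div]
  rw [IsHermitian, imMat, conjTranspose_smul, conjTranspose_sub, conjTranspose_conjTranspose, hI,
    neg_smul, ← smul_neg, neg_sub]

theorem reMat_add_I_smul_imMat (A : Matrix (Fin n) (Fin n) ℂ) :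
    reMat A + Complex.I • imMat A = A := by
  have hI : Complex.I * (Complex.I / 2) = -((1 / 2 : ℝ) : ℂ) := by
    simp [← mul_div_assoc, neg_div]
  rw [reMat, imMat, smul_smul, hI, ← Complex.coe_smul]
  module

theorem reMat_add (A B : Matrix (Fin n) (Fin n) ℂ) : reMat (A + B) = reMat A + reMat B := by
  simp only [reMat, conjTranspose_add]; module

theorem reMat_smul (c : ℝ) (A : Matrix (Fin n) (Fin n) ℂ) :
    reMat (c • A) = c • reMat A := by
  rw [reMat, reMat, conjTranspose_smul, star_trivial, ← smul_add, smul_comm]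

theorem imMat_add (A B : Matrix (Fin n) (Fin n) ℂ) : imMat (A + B) = imMat A + imMat B := by
  simp only [imMat, conjTranspose_add]; module

theorem imMat_smul (c : ℝ) (A : Matrix (Fin n) (Fin n) ℂ) :
    imMat (c • A) = c • imMat A := by
  rw [imMat, imMat, conjTranspose_smul, star_trivial, ← smul_sub, smul_comm]

theorem posDef_reMat_smul_add_smul {C D : Matrix (Fin n) (Fin n) ℂ} (hC : (reMat C).PosDef)
    (hD : (reMat D).PosDef) {a b : ℝ} (ha : 0 ≤ a) (hb : 0 ≤ b) (hab : 0 < a + b) :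
    (reMat (a • C + b • D)).PosDef := by
  rw [reMat_add, reMat_smul, reMat_smul]
  exact hC.smul_add_smul hD ha hb hab

theorem posDef_phiMat {C : Matrix (Fin n) (Fin n) ℂ} (hC : (reMat C).PosDef) :
    (phiMat C).PosDef := by
  have h := hC.inv.posSemidef.conjTranspose_mul_mul_same (imMat C)
  rw [(isHermitian_imMat C).eq] at h
  exact hC.add_posSemidef h

theorem mul_one_sub_I_smul_eq_phiMat {C : Matrix (Fin n) (Fin n) ℂ} (hC : (reMat C).PosDef) :
    C * (1 - Complex.I • ((reMat C)⁻¹ * imMat C)) = phiMat C := by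
  conv_lhs => enter [1]; rw [← reMat_add_I_smul_imMat C]
  exact add_I_smul_mul_one_sub_I_smul hC.isUnit_det

theorem one_sub_I_smul_mul_eq_phiMat {C : Matrix (Fin n) (Fin n) ℂ} (hC : (reMat C).PosDef) :
    (1 - Complex.I • (imMat C * (reMat C)⁻¹)) * C = phiMat C := by
  conv_lhs => enter [2]; rw [← reMat_add_I_smul_imMat C]
  exact one_sub_I_smul_mul_add_I_smul hC.isUnit_det

theorem isUnit_det_of_posDef_reMat {C : Matrix (Fin n) (Fin n) ℂ} (hC : (reMat C).PosDef) :
    IsUnit C.det :=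
  isUnit_det_of_right_inverse <| by
    rw [← mul_assoc, mul_one_sub_I_smul_eq_phiMat hC,
      mul_nonsing_inv _ (posDef_phiMat hC).isUnit_det]

theorem reMat_inv {C : Matrix (Fin n) (Fin n) ℂ} (hC : (reMat C).PosDef) :
    reMat C⁻¹ = (phiMat C)⁻¹ := by
  have hΦ := (posDef_phiMat hC).isUnit_det
  have hright : C⁻¹ = (1 - Complex.I • ((reMat C)⁻¹ * imMat C)) * (phiMat C)⁻¹ :=
    inv_eq_right_inv <| by
      rw [← mul_assoc, mul_one_sub_I_smul_eq_phiMat hC, mul_nonsing_inv _ hΦ]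
  have hleft : C⁻¹ = (phiMat C)⁻¹ * (1 - Complex.I • (imMat C * (reMat C)⁻¹)) :=
    inv_eq_left_inv <| by
      rw [mul_assoc, one_sub_I_smul_mul_eq_phiMat hC, nonsing_inv_mul _ hΦ]
  have hadj : (C⁻¹)ᴴ = (1 + Complex.I • ((reMat C)⁻¹ * imMat C)) * (phiMat C)⁻¹ := by
    rw [hleft, conjTranspose_mul, conjTranspose_sub, conjTranspose_one, conjTranspose_smul,
      conjTranspose_mul, conjTranspose_nonsing_inv, (isHermitian_reMat C).eq,
      (isHermitian_imMat C).eq, (posDef_phiMat hC).inv.isHermitian.eq, Complex.star_def,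
      Complex.conj_I, neg_smul, sub_neg_eq_add]
  rw [reMat, hadj, hright]
  simp only [sub_mul, add_mul, one_mul]
  module

theorem posDef_reMat_inv {C : Matrix (Fin n) (Fin n) ℂ} (hC : (reMat C).PosDef) :
    (reMat C⁻¹).PosDef := by
  rw [reMat_inv hC]
  exact (posDef_phiMat hC).inv

theorem phiMat_inv {C : Matrix (Fin n) (Fin n) ℂ} (hC : (reMat C).PosDef) :
    phiMat C⁻¹ = (reMat C)⁻¹ := by
  have h := reMat_inv (posDef_reMat_inv hC)
  rw [nonsing_inv_nonsing_inv C (isUnit_det_of_posDef_reMat hC)] at h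
  rw [h, (posDef_phiMat (posDef_reMat_inv hC)).inv_inv]

theorem phiMat_sub_phiMinorant {C : Matrix (Fin n) (Fin n) ℂ} (hC : (reMat C).PosDef)
    (K : Matrix (Fin n) (Fin n) ℂ) :
    phiMat C - phiMinorant K C
      = ((reMat C)⁻¹ * imMat C - K)ᴴ * reMat C * ((reMat C)⁻¹ * imMat C - K) :=
  add_mul_inv_mul_sub_eq_conjTranspose_mul_mul hC.isUnit_det (isHermitian_reMat C)
    (isHermitian_imMat C)

theorem phiMat_eq_phiMinorant {C : Matrix (Fin n) (Fin n) ℂ} (hC : (reMat C).PosDef) :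
    phiMat C = phiMinorant ((reMat C)⁻¹ * imMat C) C := by
  rw [← sub_eq_zero, phiMat_sub_phiMinorant hC, sub_self, mul_zero]

theorem phiMinorant_smul_add_smul (K C D : Matrix (Fin n) (Fin n) ℂ) (a b : ℝ) :
    phiMinorant K (a • C + b • D) = a • phiMinorant K C + b • phiMinorant K D := by
  simp only [phiMinorant, reMat_add, reMat_smul, imMat_add, imMat_smul, mul_add, add_mul,
    mul_smul_comm, smul_mul_assoc]
  module

theorem phiMat_convex {C D : Matrix (Fin n) (Fin n) ℂ} (hC : (reMat C).PosDef)
    (hD : (reMat D).PosDef) {s : ℝ} (hs0 : 0 ≤ s) (hs1 : s ≤ 1) :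
    ((1 - s) • phiMat C + s • phiMat D - phiMat ((1 - s) • C + s • D)).PosSemidef := by
  set Z := (1 - s) • C + s • D
  have hZ : (reMat Z).PosDef := posDef_reMat_smul_add_smul hC hD (by linarith) hs0 (by linarith)
  set K := (reMat Z)⁻¹ * imMat Z
  have hsplit : (1 - s) • phiMat C + s • phiMat D - phiMat Z
      = (1 - s) • (phiMat C - phiMinorant K C) + s • (phiMat D - phiMinorant K D) := by
    rw [phiMat_eq_phiMinorant hZ, phiMinorant_smul_add_smul]
    module
  rw [hsplit, phiMat_sub_phiMinorant hC, phiMat_sub_phiMinorant hD]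
  exact (hC.posSemidef.conjTranspose_mul_mul_same _).smul (by linarith) |>.add
    ((hD.posSemidef.conjTranspose_mul_mul_same _).smul hs0)

end Accretive

theorem harmMean_comm {n : ℕ} (X Y : Matrix (Fin n) (Fin n) ℂ) (t : ℝ) :
    harmMean Y X (1 - t) = harmMean X Y t := by
  rw [harmMean, harmMean, sub_sub_cancel, add_comm]

theorem harmMean_half_comm {n : ℕ} (X Y : Matrix (Fin n) (Fin n) ℂ) :
    harmMean Y X (1 / 2) = harmMean X Y (1 / 2) := by
  rw [← harmMean_comm, show (1 - 1 / 2 : ℝ) = 1 / 2 by norm_num]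

theorem reMat_harmMean_bounds_of_le_half {n : ℕ} {A B : Matrix (Fin n) (Fin n) ℂ}
    (hA : (reMat A).PosDef) (hB : (reMat B).PosDef) {t : ℝ} (ht0 : 0 ≤ t) (ht : t ≤ 1 / 2) :
    ((harmMean (reMat A) (reMat B) t)⁻¹ -
        (2 * t) • ((harmMean (reMat A) (reMat B) (1 / 2))⁻¹ -
          (reMat (harmMean A B (1 / 2)))⁻¹)).PosDef ∧
      (reMat (harmMean A B t) -
        ((harmMean (reMat A) (reMat B) t)⁻¹ -
          (2 * t) • ((harmMean (reMat A) (reMat B) (1 / 2))⁻¹ -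
            (reMat (harmMean A B (1 / 2)))⁻¹))⁻¹).PosSemidef ∧
      (((harmMean (reMat A) (reMat B) t)⁻¹ -
          (2 * t) • ((harmMean (reMat A) (reMat B) (1 / 2))⁻¹ -
            (reMat (harmMean A B (1 / 2)))⁻¹))⁻¹ -
        harmMean (reMat A) (reMat B) t).PosSemidef := by
  set P := A⁻¹
  set Q := B⁻¹
  set M := (1 - 1 / 2 : ℝ) • P + (1 / 2 : ℝ) • Q
  have hP : (reMat P).PosDef := posDef_reMat_inv hA
  have hQ : (reMat Q).PosDef := posDef_reMat_inv hB
  have hM : (reMat M).PosDef :=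
    posDef_reMat_smul_add_smul hP hQ (by norm_num) (by norm_num) (by norm_num)
  have hPQ : (reMat ((1 - t) • P + t • Q)).PosDef :=
    posDef_reMat_smul_add_smul hP hQ (by linarith) ht0 (by linarith)
  have hW (s : ℝ) :
      harmMean (reMat A) (reMat B) s = ((1 - s) • phiMat P + s • phiMat Q)⁻¹ := by
    rw [harmMean, phiMat_inv hA, phiMat_inv hB]
  have hWpd (s : ℝ) (hs0 : 0 ≤ s) (hs1 : s ≤ 1) :
      ((1 - s) • phiMat P + s • phiMat Q).PosDef :=
    (posDef_phiMat hP).smul_add_smul (posDef_phiMat hQ) (by linarith) hs0 (by linarith)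
  rw [hW, hW, (hWpd t ht0 (by linarith)).inv_inv,
    (hWpd (1 / 2) (by norm_num) (by norm_num)).inv_inv, harmMean, harmMean, reMat_inv hPQ,
    reMat_inv hM, (posDef_phiMat hM).inv_inv]
  have hN : (1 - t) • phiMat P + t • phiMat Q
        - (2 * t) • ((1 - 1 / 2 : ℝ) • phiMat P + (1 / 2 : ℝ) • phiMat Q - phiMat M)
      = (1 - 2 * t) • phiMat P + (2 * t) • phiMat M := by
    module
  rw [hN]
  have hNpd : ((1 - 2 * t) • phiMat P + (2 * t) • phiMat M).PosDef :=
    (posDef_phiMat hP).smul_add_smul (posDef_phiMat hM) (by linarith) (by linarith) (by linarith)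
  have hupper : ((1 - 2 * t) • phiMat P + (2 * t) • phiMat M
      - phiMat ((1 - t) • P + t • Q)).PosSemidef := by
    convert phiMat_convex hP hM (s := 2 * t) (by linarith) (by linarith) using 3
    module
  have hlower : ((1 - t) • phiMat P + t • phiMat Q
      - ((1 - 2 * t) • phiMat P + (2 * t) • phiMat M)).PosSemidef := by
    convert (phiMat_convex hP hQ (s := 1 / 2) (by norm_num) (by norm_num)).smul
      (by linarith : 0 ≤ 2 * t) using 1
    module
  exact ⟨hNpd, (posDef_phiMat hPQ).posSemidef_inv_sub_inv hupper,
    hNpd.posSemidef_inv_sub_inv hlower⟩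

theorem stmt9 (n : ℕ) (A B : Matrix (Fin n) (Fin n) ℂ)
    (hA : (reMat A).PosDef) (hB : (reMat B).PosDef)
    (t : ℝ) (ht : t ∈ Set.Icc (0 : ℝ) 1) (r : ℝ) (hr : r = min t (1 - t)) :
    ((harmMean (reMat A) (reMat B) t)⁻¹ -
        (2 * r) • ((harmMean (reMat A) (reMat B) (1 / 2))⁻¹ -
          (reMat (harmMean A B (1 / 2)))⁻¹)).PosDef ∧
      (reMat (harmMean A B t) -
        ((harmMean (reMat A) (reMat B) t)⁻¹ -
          (2 * r) • ((harmMean (reMat A) (reMat B) (1 / 2))⁻¹ -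
            (reMat (harmMean A B (1 / 2)))⁻¹))⁻¹).PosSemidef ∧
      (((harmMean (reMat A) (reMat B) t)⁻¹ -
          (2 * r) • ((harmMean (reMat A) (reMat B) (1 / 2))⁻¹ -
            (reMat (harmMean A B (1 / 2)))⁻¹))⁻¹ -
        harmMean (reMat A) (reMat B) t).PosSemidef := by
  obtain ⟨ht0, ht1⟩ := ht
  rcases le_total t (1 / 2) with h | h
  · obtain rfl : r = t := hr.trans (min_eq_left (by linarith))
    exact reMat_harmMean_bounds_of_le_half hA hB ht0 h
  · obtain rfl : r = 1 - t := hr.trans (min_eq_right (by linarith))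
    have H := reMat_harmMean_bounds_of_le_half hB hA (t := 1 - t) (by linarith) (by linarith)
    rwa [harmMean_comm, harmMean_comm, harmMean_half_comm (reMat A), harmMean_half_comm A] at H
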